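/- Let R be a reduced crystallographic root system with simple roots S and let I be a subset of S with I ≠ S. Then there exists a positive root β ∈ R⁺ \ R_I⁺ such that ⟨Σ_{α ∈ I} ϖ_α − Σ_{γ ∈ R_I⁺} γ , β∨⟩ = 0. -/

import Mathlib

/-!
Common setup: a reduced crystallographic root system realized in a real inner
product space, together with a chosen set of simple roots.  For a root `α`,
`cpair v α = ⟨v, α∨⟩ = 2⟪v,α⟫/⟪α,α⟫` is the pairing with the coroot `α∨`, and
`sref α` is the reflection in `α`.
-/

open scoped RealInnerProductSpace
open Finset

/-- `cpair v α = ⟨v, α∨⟩ = 2⟪v,α⟫/⟪α,α⟫`, the pairing of `v` with the coroot of `α`. -/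
noncomputable def cpair {V : Type*} [NormedAddCommGroup V] [InnerProductSpace ℝ V]
    (v α : V) : ℝ := 2 * ⟪v, α⟫ / ⟪α, α⟫

/-- The reflection in the root `α`: `v ↦ v - ⟨v, α∨⟩ α`. -/
noncomputable def sref {V : Type*} [NormedAddCommGroup V] [InnerProductSpace ℝ V]
    (α : V) : V → V := fun v => v - cpair v α • α

/-- A reduced crystallographic root system in a real inner product space,
with a chosen set of simple roots (every root is an integral linear combination
of the simple roots, with coefficients all nonnegative or all nonpositive). -/
structure RCRS (V : Type*) [NormedAddCommGroup V] [InnerProductSpace ℝ V] where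
  roots : Finset V
  zero_not_mem : (0 : V) ∉ roots
  crystallographic : ∀ α ∈ roots, ∀ β ∈ roots, ∃ n : ℤ, cpair β α = (n : ℝ)
  reflect_mem : ∀ α ∈ roots, ∀ β ∈ roots, sref α β ∈ roots
  reduced : ∀ α ∈ roots, ∀ t : ℝ, t • α ∈ roots → t = 1 ∨ t = -1
  simple : Finset V
  simple_subset : simple ⊆ roots
  simple_indep : LinearIndependent ℝ ((↑) : simple → V)
  exists_coeffs : ∀ β ∈ roots, ∃ c : V → ℤ,
    ((∀ α ∈ simple, 0 ≤ c α) ∨ (∀ α ∈ simple, c α ≤ 0)) ∧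
    β = ∑ α ∈ simple, (c α : ℝ) • α

namespace RCRS

variable {V : Type*} [NormedAddCommGroup V] [InnerProductSpace ℝ V] [DecidableEq V] (Φ : RCRS V)

open Classical in
/-- `R⁺`: the set of positive roots, i.e. the roots that are nonnegative integral
linear combinations of simple roots. -/
noncomputable def posRoots : Finset V :=
  Φ.roots.filter (fun β => ∃ c : V → ℤ, (∀ α ∈ Φ.simple, 0 ≤ c α) ∧
    β = ∑ α ∈ Φ.simple, (c α : ℝ) • α)

open Classical in
/-- `R_I⁺`: the set of positive roots that are integral linear combinations of the
simple roots belonging to `I`. -/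
noncomputable def posRootsOf (I : Finset V) : Finset V :=
  Φ.posRoots.filter (fun β => ∃ c : V → ℤ, β = ∑ α ∈ I, (c α : ℝ) • α)

/-- `ρ`: the half sum of the positive roots. -/
noncomputable def rho : V := (2 : ℝ)⁻¹ • ∑ β ∈ Φ.posRoots, β

/-- `ρ^P`: the half sum of the positive roots that are not in `R_I⁺`. -/
noncomputable def rhoP (I : Finset V) : V :=
  (2 : ℝ)⁻¹ • ∑ β ∈ Φ.posRoots \ Φ.posRootsOf I, β

/-- `ϖ` is a system of fundamental weights: `⟨ϖ α, β∨⟩ = δ_{α β}` for simple `α`, `β`. -/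
def IsFundamentalWeights (ϖ : V → V) : Prop :=
  ∀ α ∈ Φ.simple, ∀ β ∈ Φ.simple, cpair (ϖ α) β = if α = β then 1 else 0

/-- The product of the reflections in the roots listed in `l`
(`wordProd [α₁, …, α_N] = s_{α₁} ∘ ⋯ ∘ s_{α_N}`). -/
noncomputable def wordProd : List V → (V → V) :=
  fun l => l.foldr (fun α f => sref α ∘ f) id

/-- Membership in the subgroup of the Weyl group generated by the reflections
`s_α`, `α ∈ I`. -/
def MemWeyl (I : Finset V) (w : V → V) : Prop :=
  ∃ l : List V, (∀ α ∈ l, α ∈ I) ∧ w = wordProd l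

/-- The length of `w` with respect to the generators `s_α`, `α ∈ I`. -/
noncomputable def lengthWeyl (I : Finset V) (w : V → V) : ℕ :=
  sInf {n | ∃ l : List V, l.length = n ∧ (∀ α ∈ l, α ∈ I) ∧ w = wordProd l}

/-- `w` is the longest element of the subgroup generated by the reflections
`s_α`, `α ∈ I`. -/
def IsLongest (I : Finset V) (w : V → V) : Prop :=
  MemWeyl I w ∧ ∀ u, MemWeyl I u → lengthWeyl I u ≤ lengthWeyl I w

end RCRS

/-!
Write `ω = ∑_{α ∈ I} ϖ_α` and `σ = ∑_{γ ∈ R_I⁺} γ`. The longest element `w` of the parabolic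
subgroup `W_I` sends `R_I⁺` onto `-R_I⁺`, so `w σ = -σ`; and `2ω - σ` is orthogonal to `I`, since
`ω` and `σ / 2` both pair to `1` with every `α∨`, `α ∈ I`, hence is fixed by `W_I`. Therefore
`w ω = ω - σ`. For a simple root `γ₀ ∉ I` the root `w γ₀` lies in `γ₀ + span I`, so one of
`± w γ₀` is a positive root outside `R_I⁺`, and `⟪ω - σ, w γ₀⟫ = ⟪w ω, w γ₀⟫ = ⟪ω, γ₀⟫ = 0`.
-/

open Submodule (span)

theorem Finset.sum_comp_eq_sum_of_mapsTo {ι M : Type*} [AddCommMonoid M] {s : Finset ι}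
    {g : ι → ι} (hg : Set.MapsTo g s s) (hinj : Set.InjOn g s) (f : ι → M) :
    ∑ x ∈ s, f (g x) = ∑ x ∈ s, f x :=
  Finset.sum_nbij g hg hinj (Finset.surjOn_of_injOn_of_card_le g hg hinj le_rfl) fun _ _ => rfl

section Reflection

variable {V : Type*} [NormedAddCommGroup V] [InnerProductSpace ℝ V]

theorem reflection_orthogonal_singleton_apply (α v : V) :
    (ℝ ∙ α)ᗮ.reflection v = v - cpair v α • α := by
  rw [Submodule.reflection_orthogonal_apply, Submodule.reflection_singleton_apply, cpair,
    real_inner_self_eq_norm_sq, real_inner_comm]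
  simp only [RCLike.ofReal_real_eq_id, id]
  module

theorem sref_eq_reflection (α : V) : sref α = (ℝ ∙ α)ᗮ.reflection :=
  funext fun v => (reflection_orthogonal_singleton_apply α v).symm

theorem cpair_sum_left {ι : Type*} (s : Finset ι) (f : ι → V) (α : V) :
    cpair (∑ i ∈ s, f i) α = ∑ i ∈ s, cpair (f i) α := by
  simp only [cpair, sum_inner, Finset.mul_sum, Finset.sum_div]

theorem cpair_sub_left (x y α : V) : cpair (x - y) α = cpair x α - cpair y α := by
  simp only [cpair, inner_sub_left]; ring

theorem cpair_smul_left (r : ℝ) (x α : V) : cpair (r • x) α = r * cpair x α := by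
  simp only [cpair, real_inner_smul_left]; ring

theorem inner_eq_zero_of_cpair_eq_zero {x α : V} (hα : α ≠ 0) (h : cpair x α = 0) :
    ⟪x, α⟫ = 0 := by
  simpa [cpair, hα] using h

theorem cpair_eq_zero_of_inner_eq_zero {x α : V} (h : ⟪x, α⟫ = 0) : cpair x α = 0 := by
  simp [cpair, h]

noncomputable def reflectionGroup (s : Set V) : Subgroup (V ≃ₗᵢ[ℝ] V) :=
  Subgroup.closure ((fun α => (ℝ ∙ α)ᗮ.reflection) '' s)

variable {s : Set V}

theorem reflection_mem_reflectionGroup {α : V} (hα : α ∈ s) :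
    (ℝ ∙ α)ᗮ.reflection ∈ reflectionGroup s :=
  Subgroup.subset_closure ⟨α, hα, rfl⟩

@[elab_as_elim]
theorem reflectionGroup_induction {p : (w : V ≃ₗᵢ[ℝ] V) → w ∈ reflectionGroup s → Prop}
    (reflection : ∀ α (hα : α ∈ s), p _ (reflection_mem_reflectionGroup hα))
    (one : p 1 (one_mem _))
    (mul : ∀ u w hu hw, p u hu → p w hw → p (u * w) (mul_mem hu hw))
    {w : V ≃ₗᵢ[ℝ] V} (hw : w ∈ reflectionGroup s) : p w hw := by
  induction hw using Subgroup.closure_induction'' with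
  | mem _ h => obtain ⟨α, hα, rfl⟩ := h; exact reflection α hα
  | inv_mem _ h => obtain ⟨α, hα, rfl⟩ := h; exact reflection α hα
  | one => exact one
  | mul u w hu hw ihu ihw => exact mul u w hu hw ihu ihw

theorem apply_sub_mem_span_of_mem_reflectionGroup {w : V ≃ₗᵢ[ℝ] V} (hw : w ∈ reflectionGroup s)
    (x : V) : w x - x ∈ span ℝ s := by
  induction hw using reflectionGroup_induction generalizing x with
  | reflection α hα =>
    rw [reflection_orthogonal_singleton_apply, sub_sub_cancel_left]
    exact neg_mem (Submodule.smul_mem _ _ (Submodule.subset_span hα))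
  | one => simp
  | mul u w _ _ hu hw =>
    rw [LinearIsometryEquiv.coe_mul, Function.comp_apply, ← sub_add_sub_cancel]
    exact add_mem (hu _) (hw x)

theorem apply_mem_span_of_mem_reflectionGroup {w : V ≃ₗᵢ[ℝ] V} (hw : w ∈ reflectionGroup s)
    {x : V} (hx : x ∈ span ℝ s) : w x ∈ span ℝ s := by
  simpa using add_mem (apply_sub_mem_span_of_mem_reflectionGroup hw x) hx

theorem apply_eq_self_of_mem_reflectionGroup {w : V ≃ₗᵢ[ℝ] V} (hw : w ∈ reflectionGroup s)
    {x : V} (hx : ∀ α ∈ s, ⟪x, α⟫ = 0) : w x = x := by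
  induction hw using reflectionGroup_induction with
  | reflection α hα =>
    exact Submodule.reflection_mem_subspace_eq_self
      (Submodule.mem_orthogonal_singleton_iff_inner_right.mpr (real_inner_comm α x ▸ hx α hα))
  | one => rfl
  | mul u w _ _ hu hw => simp [hu, hw]

end Reflection

namespace RCRS

variable {V : Type*} [NormedAddCommGroup V] [InnerProductSpace ℝ V] (Φ : RCRS V)

theorem linearIndepOn_simple : LinearIndepOn ℝ id (Φ.simple : Set V) := Φ.simple_indep

open Classical in
/-- The coordinate along the simple root `δ`, extended to all of `V` through a basis containing
the simple roots. -/
noncomputable def coord (δ : V) : V →ₗ[ℝ] ℝ :=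
  if h : δ ∈ Φ.linearIndepOn_simple.extend (Set.subset_univ _) then
    (Module.Basis.extend Φ.linearIndepOn_simple).coord ⟨δ, h⟩ else 0

variable {Φ} {I : Finset V} {α β δ ε : V}

theorem coord_apply_simple (hδ : δ ∈ Φ.simple) (hε : ε ∈ Φ.simple) :
    Φ.coord δ ε = Finsupp.single ε (1 : ℝ) δ := by
  classical
  have hext := Φ.linearIndepOn_simple.subset_extend (Set.subset_univ _)
  have hε' : Module.Basis.extend Φ.linearIndepOn_simple ⟨ε, hext hε⟩ = ε := by
    rw [Module.Basis.coe_extend]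
  rw [coord, dif_pos (hext hδ), ← hε', Module.Basis.coord_apply, Module.Basis.repr_self,
    Finsupp.single_apply, Finsupp.single_apply]
  simp [Subtype.ext_iff]

theorem coord_self (hδ : δ ∈ Φ.simple) : Φ.coord δ δ = 1 := by
  rw [coord_apply_simple hδ hδ, Finsupp.single_eq_same]

theorem coord_of_ne (hδ : δ ∈ Φ.simple) (hε : ε ∈ Φ.simple) (h : ε ≠ δ) : Φ.coord δ ε = 0 := by
  rw [coord_apply_simple hδ hε, Finsupp.single_eq_of_ne h.symm]

theorem coord_sum_smul {t : Finset V} (ht : t ⊆ Φ.simple) (c : V → ℝ) (hδ : δ ∈ t) :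
    Φ.coord δ (∑ ε ∈ t, c ε • ε) = c δ := by
  rw [map_sum, Finset.sum_eq_single δ (fun ε hε hne => by
    rw [map_smul, coord_of_ne (ht hδ) (ht hε) hne, smul_zero]) (absurd hδ),
    map_smul, coord_self (ht hδ), smul_eq_mul, mul_one]

theorem sum_coord_smul_of_mem_span {t : Finset V} (ht : t ⊆ Φ.simple) {x : V}
    (hx : x ∈ span ℝ (t : Set V)) : ∑ δ ∈ t, Φ.coord δ x • δ = x := by
  obtain ⟨c, -, rfl⟩ := Submodule.mem_span_finset.mp hx
  exact Finset.sum_congr rfl fun δ hδ => by rw [coord_sum_smul ht c hδ]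

theorem coord_eq_zero_of_mem_span (hI : I ⊆ Φ.simple) (hδ : δ ∈ Φ.simple) (hδI : δ ∉ I)
    {x : V} (hx : x ∈ span ℝ (I : Set V)) : Φ.coord δ x = 0 := by
  induction hx using Submodule.span_induction with
  | mem ε hε => exact coord_of_ne hδ (hI hε) (ne_of_mem_of_not_mem hε hδI)
  | zero => exact map_zero _
  | add x y _ _ hx hy => rw [map_add, hx, hy, add_zero]
  | smul r x _ hx => rw [map_smul, hx, smul_zero]

theorem notMem_span_of_notMem (hI : I ⊆ Φ.simple) (hδ : δ ∈ Φ.simple) (hδI : δ ∉ I) :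
    δ ∉ span ℝ (I : Set V) := fun h => by
  simpa [coord_self hδ] using coord_eq_zero_of_mem_span hI hδ hδI h

theorem mem_span_simple (hβ : β ∈ Φ.roots) : β ∈ span ℝ (Φ.simple : Set V) := by
  obtain ⟨c, -, rfl⟩ := Φ.exists_coeffs β hβ
  exact Submodule.sum_mem _ fun α hα => Submodule.smul_mem _ _ (Submodule.subset_span hα)

theorem ne_zero_of_mem_roots (hβ : β ∈ Φ.roots) : β ≠ 0 :=
  fun h => Φ.zero_not_mem (h ▸ hβ)

theorem exists_coord_ne_zero (hβ : β ∈ Φ.roots) : ∃ δ ∈ Φ.simple, Φ.coord δ β ≠ 0 := by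
  by_contra! h
  refine ne_zero_of_mem_roots hβ ?_
  rw [← sum_coord_smul_of_mem_span subset_rfl (mem_span_simple hβ)]
  exact Finset.sum_eq_zero fun δ hδ => by rw [h δ hδ, zero_smul]

theorem mem_posRoots_iff : β ∈ Φ.posRoots ↔ β ∈ Φ.roots ∧
    ∃ c : V → ℤ, (∀ α ∈ Φ.simple, 0 ≤ c α) ∧ β = ∑ α ∈ Φ.simple, (c α : ℝ) • α := by
  classical
  simp only [posRoots, Finset.mem_filter]

theorem mem_posRootsOf_iff_exists_coeffs :
    β ∈ Φ.posRootsOf I ↔ β ∈ Φ.posRoots ∧ ∃ c : V → ℤ, β = ∑ α ∈ I, (c α : ℝ) • α := by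
  classical
  simp only [posRootsOf, Finset.mem_filter]

theorem mem_roots_of_mem_posRoots (hβ : β ∈ Φ.posRoots) : β ∈ Φ.roots :=
  (mem_posRoots_iff.mp hβ).1

theorem reflection_mem_roots (hα : α ∈ Φ.roots) (hβ : β ∈ Φ.roots) :
    (ℝ ∙ α)ᗮ.reflection β ∈ Φ.roots :=
  sref_eq_reflection α ▸ Φ.reflect_mem α hα β hβ

theorem neg_mem_roots (hβ : β ∈ Φ.roots) : -β ∈ Φ.roots := by
  simpa only [Submodule.reflection_orthogonalComplement_singleton_eq_neg] using
    reflection_mem_roots hβ hβ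

theorem coord_nonneg_of_mem_posRoots (hβ : β ∈ Φ.posRoots) (hδ : δ ∈ Φ.simple) :
    0 ≤ Φ.coord δ β := by
  obtain ⟨-, c, hc, rfl⟩ := mem_posRoots_iff.mp hβ
  rw [coord_sum_smul subset_rfl _ hδ]
  exact_mod_cast hc δ hδ

theorem neg_notMem_posRoots (hβ : β ∈ Φ.posRoots) : -β ∉ Φ.posRoots := fun h => by
  obtain ⟨δ, hδ, hne⟩ := exists_coord_ne_zero (mem_roots_of_mem_posRoots hβ)
  have := coord_nonneg_of_mem_posRoots h hδ
  rw [map_neg] at this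
  exact hne (le_antisymm (by linarith) (coord_nonneg_of_mem_posRoots hβ hδ))

theorem mem_posRoots_or_neg_mem (hβ : β ∈ Φ.roots) : β ∈ Φ.posRoots ∨ -β ∈ Φ.posRoots := by
  obtain ⟨c, hc | hc, hβc⟩ := Φ.exists_coeffs β hβ
  · exact .inl (mem_posRoots_iff.mpr ⟨hβ, c, hc, hβc⟩)
  · refine .inr (mem_posRoots_iff.mpr
      ⟨neg_mem_roots hβ, -c, fun α hα => by simpa using hc α hα, ?_⟩)
    simp [hβc, Finset.sum_neg_distrib]

theorem mem_posRoots_of_coord_pos (hβ : β ∈ Φ.roots) (hδ : δ ∈ Φ.simple)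
    (h : 0 < Φ.coord δ β) : β ∈ Φ.posRoots :=
  (mem_posRoots_or_neg_mem hβ).resolve_right fun hneg => by
    have := coord_nonneg_of_mem_posRoots hneg hδ
    rw [map_neg] at this
    linarith

theorem exists_coord_pos_of_ne (hβ : β ∈ Φ.posRoots) (hα : α ∈ Φ.simple) (hne : β ≠ α) :
    ∃ δ ∈ Φ.simple, δ ≠ α ∧ 0 < Φ.coord δ β := by
  have hβR := mem_roots_of_mem_posRoots hβ
  by_contra! h
  have hβα : β = Φ.coord α β • α := by
    conv_lhs => rw [← sum_coord_smul_of_mem_span subset_rfl (mem_span_simple hβR)]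
    refine Finset.sum_eq_single α (fun δ hδ hδα => ?_) (absurd hα)
    rw [le_antisymm (h δ hδ hδα) (coord_nonneg_of_mem_posRoots hβ hδ), zero_smul]
  rcases Φ.reduced α (Φ.simple_subset hα) _ (hβα ▸ hβR) with h1 | h1
  · exact hne (by rw [hβα, h1, one_smul])
  · linarith [coord_nonneg_of_mem_posRoots hβ hα]

theorem mem_posRootsOf_iff (hI : I ⊆ Φ.simple) :
    β ∈ Φ.posRootsOf I ↔ β ∈ Φ.posRoots ∧ β ∈ span ℝ (I : Set V) := by
  rw [mem_posRootsOf_iff_exists_coeffs]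
  refine and_congr_right fun hβ => ⟨?_, fun hβI => ?_⟩
  · rintro ⟨c, rfl⟩
    exact Submodule.sum_mem _ fun α hα => Submodule.smul_mem _ _ (Submodule.subset_span hα)
  · obtain ⟨-, c, -, hβc⟩ := mem_posRoots_iff.mp hβ
    refine ⟨c, hβc.trans (Finset.sum_subset hI fun δ hδ hδI => ?_).symm⟩
    have := coord_eq_zero_of_mem_span hI hδ hδI hβI
    rw [hβc, coord_sum_smul subset_rfl _ hδ] at this
    rw [this, zero_smul]

theorem mem_posRootsOf_of_mem (hI : I ⊆ Φ.simple) (hα : α ∈ I) : α ∈ Φ.posRootsOf I :=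
  (mem_posRootsOf_iff hI).mpr ⟨mem_posRoots_of_coord_pos (Φ.simple_subset (hI hα)) (hI hα)
    (by rw [coord_self (hI hα)]; exact one_pos), Submodule.subset_span hα⟩

theorem mem_posRootsOf_or_neg_mem (hI : I ⊆ Φ.simple) (hβ : β ∈ Φ.roots)
    (hβI : β ∈ span ℝ (I : Set V)) : β ∈ Φ.posRootsOf I ∨ -β ∈ Φ.posRootsOf I := by
  simp only [mem_posRootsOf_iff hI, neg_mem_iff, and_iff_left hβI]
  exact mem_posRoots_or_neg_mem hβ

theorem reflection_mem_posRootsOf (hI : I ⊆ Φ.simple) (hα : α ∈ I) (hβ : β ∈ Φ.posRootsOf I)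
    (hne : β ≠ α) :
    (ℝ ∙ α)ᗮ.reflection β ∈ Φ.posRootsOf I ∧ (ℝ ∙ α)ᗮ.reflection β ≠ α := by
  obtain ⟨hβpos, hβI⟩ := (mem_posRootsOf_iff hI).mp hβ
  obtain ⟨δ, hδ, hδα, hpos⟩ := exists_coord_pos_of_ne hβpos (hI hα) hne
  have hcoord : Φ.coord δ ((ℝ ∙ α)ᗮ.reflection β) = Φ.coord δ β := by
    rw [reflection_orthogonal_singleton_apply, map_sub, map_smul,
      coord_of_ne hδ (hI hα) hδα.symm, smul_zero, sub_zero]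
  have hroot := reflection_mem_roots (Φ.simple_subset (hI hα)) (mem_roots_of_mem_posRoots hβpos)
  refine ⟨(mem_posRootsOf_iff hI).mpr ⟨mem_posRoots_of_coord_pos hroot hδ (hcoord ▸ hpos), ?_⟩,
    fun h => ?_⟩
  · rw [reflection_orthogonal_singleton_apply]
    exact sub_mem hβI (Submodule.smul_mem _ _ (Submodule.subset_span hα))
  · rw [h, coord_of_ne hδ (hI hα) hδα.symm] at hcoord
    linarith

theorem cpair_sum_posRootsOf (hI : I ⊆ Φ.simple) (hα : α ∈ I) :
    cpair (∑ γ ∈ Φ.posRootsOf I, γ) α = 2 := by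
  classical
  set s := (ℝ ∙ α)ᗮ.reflection
  have hαI := mem_posRootsOf_of_mem hI hα
  have hperm : ∑ γ ∈ (Φ.posRootsOf I).erase α, s γ = ∑ γ ∈ (Φ.posRootsOf I).erase α, γ := by
    refine Finset.sum_comp_eq_sum_of_mapsTo (fun γ hγ => ?_) s.injective.injOn id
    obtain ⟨hne, hγ⟩ := Finset.mem_erase.mp hγ
    obtain ⟨h1, h2⟩ := reflection_mem_posRootsOf hI hα hγ hne
    exact Finset.mem_erase.mpr ⟨h2, h1⟩
  have h : s (∑ γ ∈ Φ.posRootsOf I, γ) = ∑ γ ∈ Φ.posRootsOf I, γ - (2 : ℝ) • α := by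
    rw [map_sum, ← Finset.sum_erase_add _ _ hαI, hperm,
      Submodule.reflection_orthogonalComplement_singleton_eq_neg, ← Finset.sum_erase_add _ _ hαI]
    module
  rw [reflection_orthogonal_singleton_apply, sub_right_inj] at h
  exact smul_left_injective ℝ (ne_zero_of_mem_roots (Φ.simple_subset (hI hα))) h

theorem apply_mem_roots {s : Set V} (hs : s ⊆ Φ.roots) {w : V ≃ₗᵢ[ℝ] V}
    (hw : w ∈ reflectionGroup s) (hβ : β ∈ Φ.roots) : w β ∈ Φ.roots := by
  induction hw using reflectionGroup_induction generalizing β with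
  | reflection α hα => exact reflection_mem_roots (hs hα) hβ
  | one => exact hβ
  | mul u w _ _ hu hw => exact hu (hw hβ)

theorem apply_mem_posRootsOf_or_neg_mem (hI : I ⊆ Φ.simple) {w : V ≃ₗᵢ[ℝ] V}
    (hw : w ∈ reflectionGroup (I : Set V)) {γ : V} (hγ : γ ∈ Φ.posRootsOf I) :
    w γ ∈ Φ.posRootsOf I ∨ -w γ ∈ Φ.posRootsOf I := by
  obtain ⟨hγpos, hγI⟩ := (mem_posRootsOf_iff hI).mp hγ
  exact mem_posRootsOf_or_neg_mem hI
    (apply_mem_roots (fun α hα => Φ.simple_subset (hI hα)) hw (mem_roots_of_mem_posRoots hγpos))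
    (apply_mem_span_of_mem_reflectionGroup hw hγI)

theorem neg_apply_mem_posRootsOf (hI : I ⊆ Φ.simple) {w : V ≃ₗᵢ[ℝ] V}
    (hw : w ∈ reflectionGroup (I : Set V)) (h : ∀ α ∈ I, -w α ∈ Φ.posRootsOf I) {γ : V}
    (hγ : γ ∈ Φ.posRootsOf I) : -w γ ∈ Φ.posRootsOf I := by
  refine (apply_mem_posRootsOf_or_neg_mem hI hw hγ).resolve_left fun hwγ => ?_
  obtain ⟨hγpos, hγI⟩ := (mem_posRootsOf_iff hI).mp hγ
  have hwγpos := ((mem_posRootsOf_iff hI).mp hwγ).1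
  obtain ⟨δ, hδ, hne⟩ := exists_coord_ne_zero (mem_roots_of_mem_posRoots hwγpos)
  have hnonpos : Φ.coord δ (w γ) ≤ 0 := by
    rw [← sum_coord_smul_of_mem_span hI hγI, map_sum, map_sum]
    refine Finset.sum_nonpos fun α hα => ?_
    have hwα := coord_nonneg_of_mem_posRoots ((mem_posRootsOf_iff hI).mp (h α hα)).1 hδ
    rw [map_neg] at hwα
    rw [map_smul, map_smul, smul_eq_mul]
    exact mul_nonpos_of_nonneg_of_nonpos (coord_nonneg_of_mem_posRoots hγpos (hI hα))
      (by linarith)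
  exact hne (le_antisymm hnonpos (coord_nonneg_of_mem_posRoots hwγpos hδ))

open Classical in
noncomputable def nonInversions (I : Finset V) (w : V ≃ₗᵢ[ℝ] V) : Finset V :=
  (Φ.posRootsOf I).filter fun γ => w γ ∈ Φ.posRootsOf I

theorem mem_nonInversions {w : V ≃ₗᵢ[ℝ] V} {γ : V} :
    γ ∈ Φ.nonInversions I w ↔ γ ∈ Φ.posRootsOf I ∧ w γ ∈ Φ.posRootsOf I := by
  classical
  simp only [nonInversions, Finset.mem_filter]

theorem card_nonInversions_mul_lt (hI : I ⊆ Φ.simple) (hα : α ∈ I) {w : V ≃ₗᵢ[ℝ] V}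
    (hwα : w α ∈ Φ.posRootsOf I) :
    #(Φ.nonInversions I (w * (ℝ ∙ α)ᗮ.reflection)) < #(Φ.nonInversions I w) := by
  classical
  have hα' : α ∈ Φ.nonInversions I w := mem_nonInversions.mpr ⟨mem_posRootsOf_of_mem hI hα, hwα⟩
  refine lt_of_le_of_lt ?_ (Finset.card_erase_lt_of_mem hα')
  refine Finset.card_le_card_of_injOn _ (fun γ hγ => ?_)
    (ℝ ∙ α)ᗮ.reflection.injective.injOn
  obtain ⟨hγ, hwγ⟩ := mem_nonInversions.mp (Finset.mem_coe.mp hγ)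
  rw [LinearIsometryEquiv.coe_mul, Function.comp_apply] at hwγ
  have hne : γ ≠ α := by
    rintro rfl
    rw [Submodule.reflection_orthogonalComplement_singleton_eq_neg, map_neg] at hwγ
    exact neg_notMem_posRoots ((mem_posRootsOf_iff hI).mp hwα).1 ((mem_posRootsOf_iff hI).mp hwγ).1
  obtain ⟨h1, h2⟩ := reflection_mem_posRootsOf hI hα hγ hne
  exact Finset.mem_erase.mpr ⟨h2, mem_nonInversions.mpr ⟨h1, hwγ⟩⟩

/-- A minimiser of `#(nonInversions I w)` over `W_I`, i.e. the longest element `w_I`, works. -/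
theorem exists_mem_reflectionGroup_neg_apply_mem_posRootsOf (hI : I ⊆ Φ.simple) :
    ∃ w ∈ reflectionGroup (I : Set V), ∀ γ ∈ Φ.posRootsOf I, -w γ ∈ Φ.posRootsOf I := by
  obtain ⟨w, hw, hmin⟩ := (measure fun w => #(Φ.nonInversions I w)).wf.has_min
    (reflectionGroup (I : Set V)) ⟨1, one_mem _⟩
  refine ⟨w, hw, fun γ => neg_apply_mem_posRootsOf hI hw fun α hα => ?_⟩
  refine (apply_mem_posRootsOf_or_neg_mem hI hw (mem_posRootsOf_of_mem hI hα)).resolve_left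
    fun hwα => ?_
  exact hmin _ (mul_mem hw (reflection_mem_reflectionGroup hα))
    (card_nonInversions_mul_lt hI hα hwα)

theorem IsFundamentalWeights.cpair_sum [DecidableEq V] {ϖ : V → V}
    (hϖ : Φ.IsFundamentalWeights ϖ) (hI : I ⊆ Φ.simple) (hα : α ∈ Φ.simple) :
    cpair (∑ a ∈ I, ϖ a) α = if α ∈ I then 1 else 0 := by
  rw [cpair_sum_left, Finset.sum_congr rfl fun a ha => hϖ a (hI ha) α hα, Finset.sum_ite_eq']

theorem apply_sum_fundamentalWeights [DecidableEq V] {ϖ : V → V}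
    (hϖ : Φ.IsFundamentalWeights ϖ) (hI : I ⊆ Φ.simple) {w : V ≃ₗᵢ[ℝ] V}
    (hw : w ∈ reflectionGroup (I : Set V)) (hneg : ∀ γ ∈ Φ.posRootsOf I, -w γ ∈ Φ.posRootsOf I) :
    w (∑ a ∈ I, ϖ a) = ∑ a ∈ I, ϖ a - ∑ γ ∈ Φ.posRootsOf I, γ := by
  set ω := ∑ a ∈ I, ϖ a
  set σ := ∑ γ ∈ Φ.posRootsOf I, γ
  have hσ : w σ = -σ := by
    have := Finset.sum_comp_eq_sum_of_mapsTo (g := fun γ => -w γ) hneg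
      (fun x _ y _ hxy => w.injective (neg_injective hxy)) fun γ => γ
    rw [map_sum, ← neg_eq_iff_eq_neg, ← Finset.sum_neg_distrib]
    exact this
  have hfix : w ((2 : ℝ) • ω - σ) = (2 : ℝ) • ω - σ := by
    refine apply_eq_self_of_mem_reflectionGroup hw fun α hα =>
      inner_eq_zero_of_cpair_eq_zero (ne_zero_of_mem_roots (Φ.simple_subset (hI hα))) ?_
    rw [cpair_sub_left, cpair_smul_left, hϖ.cpair_sum hI (hI hα), if_pos (Finset.mem_coe.mp hα),
      cpair_sum_posRootsOf hI hα]
    norm_num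
  rw [map_sub, map_smul, hσ] at hfix
  apply smul_right_injective V (two_ne_zero' ℝ)
  linear_combination (norm := module) hfix

end RCRS

/-- For a subset `I ⊆ S` with `I ≠ S`, there exists a positive root
`β ∈ R⁺ \ R_I⁺` with `⟨Σ_{α ∈ I} ϖ_α − Σ_{γ ∈ R_I⁺} γ, β∨⟩ = 0`. -/
theorem exists_cpair_eq_zero {V : Type*} [NormedAddCommGroup V] [InnerProductSpace ℝ V] [DecidableEq V]
    (Φ : RCRS V)
    (I : Finset V) (hI : I ⊆ Φ.simple) (hne : I ≠ Φ.simple)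
    (ϖ : V → V) (hϖ : Φ.IsFundamentalWeights ϖ) :
    ∃ β ∈ Φ.posRoots \ Φ.posRootsOf I,
      cpair ((∑ α ∈ I, ϖ α) - ∑ γ ∈ Φ.posRootsOf I, γ) β = 0 := by
  obtain ⟨γ₀, hγ₀, hγ₀I⟩ := Finset.exists_of_ssubset (hI.ssubset_of_ne hne)
  obtain ⟨w, hw, hneg⟩ := Φ.exists_mem_reflectionGroup_neg_apply_mem_posRootsOf hI
  have horth : ⟪(∑ α ∈ I, ϖ α) - ∑ γ ∈ Φ.posRootsOf I, γ, w γ₀⟫ = 0 := by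
    rw [← RCRS.apply_sum_fundamentalWeights hϖ hI hw hneg, LinearIsometryEquiv.inner_map_map]
    refine inner_eq_zero_of_cpair_eq_zero (RCRS.ne_zero_of_mem_roots (Φ.simple_subset hγ₀)) ?_
    rw [hϖ.cpair_sum hI hγ₀, if_neg hγ₀I]
  have hspan : w γ₀ ∉ span ℝ (I : Set V) := fun h => RCRS.notMem_span_of_notMem hI hγ₀ hγ₀I
    (by simpa using sub_mem h (apply_sub_mem_span_of_mem_reflectionGroup hw γ₀))
  have hroot : w γ₀ ∈ Φ.roots :=
    RCRS.apply_mem_roots (fun α hα => Φ.simple_subset (hI hα)) hw (Φ.simple_subset hγ₀)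
  rcases RCRS.mem_posRoots_or_neg_mem hroot with hpos | hpos
  · refine ⟨w γ₀, Finset.mem_sdiff.2 ⟨hpos, fun h => hspan ?_⟩,
      cpair_eq_zero_of_inner_eq_zero horth⟩
    exact ((RCRS.mem_posRootsOf_iff hI).mp h).2
  · refine ⟨-w γ₀, Finset.mem_sdiff.2 ⟨hpos, fun h => hspan ?_⟩,
      cpair_eq_zero_of_inner_eq_zero (by rw [inner_neg_right, horth, neg_zero])⟩
    exact neg_mem_iff.mp ((RCRS.mem_posRootsOf_iff hI).mp h).2
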